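/- arXiv:2308.03443 — 9 statements merged into one kernel-verified Lean document; each statement's English description precedes it below -/
import Mathlib

section
/- The Doubly Robust estimator is unbiased under common support: with w(x,a) = π_e(a|x)/π_b(a|x), for any reward model q̂, E_{p(x)π_b(a|x)p(r|x,a)}[ ∑_{a'} π_e(a'|x) q̂(x,a') + w(x,a)(r − q̂(x,a)) ] = V(π_e), provided π_e(a|x) > 0 implies π_b(a|x) > 0 for all x, a. -/
/-!
Conditioning on the context `x` and the logged action `a`, the reward enters linearly, so the
inner expectation replaces `r` by `q x a`. Averaging over `a ∼ π_b` then turns the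
importance-weighted correction `π_b · (π_e / π_b) · (q - q̂)` into `π_e · (q - q̂)`; this needs
`π_b(a|x) = 0 → π_e(a|x) = 0`, which common support and `π_e ≥ 0` provide. The correction
term exactly cancels the model term `∑ π_e q̂`, whatever `q̂` is.
-/

open Finset

section

variable {ι : Type*} [Fintype ι]

theorem sum_mul_add_mul_sub_of_sum_eq_one (μ f : ι → ℝ) (hμ : ∑ i, μ i = 1) (c w d : ℝ) :
    ∑ i, μ i * (c + w * (f i - d)) = c + w * (∑ i, μ i * f i - d) := by
  have hsplit : ∀ i, μ i * (c + w * (f i - d)) = μ i * (c - w * d) + w * (μ i * f i) :=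
    fun i => by ring
  rw [sum_congr rfl fun i _ => hsplit i, sum_add_distrib, ← sum_mul, ← mul_sum, hμ]
  ring

theorem sum_mul_div_mul_of_imp (πb πe f : ι → ℝ) (h : ∀ i, πb i = 0 → πe i = 0) :
    ∑ i, πb i * (πe i / πb i * f i) = ∑ i, πe i * f i :=
  sum_congr rfl fun i _ => by rw [← mul_assoc, mul_div_cancel_of_imp' (h i)]

theorem sum_mul_model_add_weighted_residual (πb πe q qhat : ι → ℝ) (hπb : ∑ i, πb i = 1)
    (h : ∀ i, πb i = 0 → πe i = 0) :
    ∑ i, πb i * ((∑ j, πe j * qhat j) + πe i / πb i * (q i - qhat i)) = ∑ i, πe i * q i := by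
  simp only [mul_add, sum_add_distrib, ← sum_mul, hπb, one_mul]
  rw [sum_mul_div_mul_of_imp πb πe _ h, ← sum_add_distrib]
  exact sum_congr rfl fun i _ => by ring

end

theorem dr_unbiased_common_support_general {X A R : Type*} [Fintype X] [Fintype A] [Fintype R]
    (p : X → ℝ) (πb πe : X → A → ℝ) (pr : X → A → R → ℝ) (rv : R → ℝ)
    (q qhat : X → A → ℝ)
    (hπbsum : ∀ x, ∑ a, πb x a = 1)
    (hπe : ∀ x a, 0 ≤ πe x a)
    (hprsum : ∀ x a, ∑ r, pr x a r = 1)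
    (hq : ∀ x a, q x a = ∑ r, pr x a r * rv r)
    (hsupport : ∀ x a, 0 < πe x a → 0 < πb x a) :
    ∑ x, p x * ∑ a, πb x a * ∑ r, pr x a r *
        ((∑ a', πe x a' * qhat x a') + πe x a / πb x a * (rv r - qhat x a))
      = ∑ x, p x * ∑ a, πe x a * q x a := by
  refine sum_congr rfl fun x _ => congr_arg (p x * ·) ?_
  have hzero : ∀ a, πb x a = 0 → πe x a = 0 := fun a hb =>
    (hπe x a).eq_or_lt.elim Eq.symm fun he => absurd hb (hsupport x a he).ne'
  simp only [sum_mul_add_mul_sub_of_sum_eq_one _ _ (hprsum x _), ← hq]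
  exact sum_mul_model_add_weighted_residual _ _ _ _ (hπbsum x) hzero

/-- The Doubly Robust estimator is unbiased under common support, for any reward model `qhat`. -/
theorem dr_unbiased_common_support {X A R : Type*} [Fintype X] [Fintype A] [Fintype R]
    (p : X → ℝ) (πb πe : X → A → ℝ) (pr : X → A → R → ℝ) (rv : R → ℝ)
    (q qhat : X → A → ℝ)
    (hp : ∀ x, 0 ≤ p x) (hpsum : ∑ x, p x = 1)
    (hπb : ∀ x a, 0 ≤ πb x a) (hπbsum : ∀ x, ∑ a, πb x a = 1)
    (hπe : ∀ x a, 0 ≤ πe x a) (hπesum : ∀ x, ∑ a, πe x a = 1)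
    (hpr : ∀ x a r, 0 ≤ pr x a r) (hprsum : ∀ x a, ∑ r, pr x a r = 1)
    (hq : ∀ x a, q x a = ∑ r, pr x a r * rv r)
    (hsupport : ∀ x a, 0 < πe x a → 0 < πb x a) :
    ∑ x, p x * ∑ a, πb x a * ∑ r, pr x a r *
        ((∑ a', πe x a' * qhat x a') + πe x a / πb x a * (rv r - qhat x a))
      = ∑ x, p x * ∑ a, πe x a * q x a :=
  dr_unbiased_common_support_general p πb πe pr rv q qhat hπbsum hπe hprsum hq hsupport
end

section
/- The Doubly Robust estimator is unbiased under perfect model estimation even without common support: if q̂(x,a) = q(x,a) for all x,a with π_b(a|x) > 0, and if w(x,a) is defined as π_e(a|x)/π_b(a|x) when π_b(a|x) > 0 (and the term has π_b(a|x) = 0 probability otherwise), then E_{p(x)π_b(a|x)p(r|x,a)}[ ∑_{a'} π_e(a'|x) q̂(x,a') + w(x,a)(r − q̂(x,a)) ] equals ∑_x p(x) ∑_a π_e(a|x) q̂(x,a), which equals V(π_e) when q̂ = q everywhere. -/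
/-! The correction term `w(x,a) (r - q̂(x,a))` has conditional mean `w(x,a) (q(x,a) - q̂(x,a))`
given `(x,a)`. Weighted by `π_b(a|x)` it vanishes: off the support of `π_b` because of the factor
`π_b(a|x) = 0`, on it because `q̂ = q` there. What remains is the direct-method term, whose
average over `a ∼ π_b` is itself since `π_b(·|x)` sums to one. -/

open Finset

theorem sum_mul_add_mul_sub {R : Type*} [Fintype R] (μ f : R → ℝ) (c w b : ℝ)
    (hμ : ∑ r, μ r = 1) :
    ∑ r, μ r * (c + w * (f r - b)) = c + w * (∑ r, μ r * f r - b) := by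
  have hsplit : ∀ r, μ r * (c + w * (f r - b)) = μ r * (c - w * b) + w * (μ r * f r) :=
    fun r => by ring
  rw [sum_congr rfl fun r _ => hsplit r, sum_add_distrib, ← sum_mul, ← mul_sum, hμ]
  ring

theorem mul_add_ite_div_mul_eq {b e c d : ℝ} (hd : 0 < b → d = 0) :
    b * (c + (if 0 < b then e / b else 0) * d) = b * c := by
  by_cases hb : 0 < b <;> simp [hb, hd]

theorem dr_expectation_eq_direct {A R : Type*} [Fintype A] [Fintype R]
    (πb πe : A → ℝ) (pr : A → R → ℝ) (rv : R → ℝ) (q qhat : A → ℝ)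
    (hπbsum : ∑ a, πb a = 1) (hprsum : ∀ a, ∑ r, pr a r = 1)
    (hq : ∀ a, q a = ∑ r, pr a r * rv r) (hperfect : ∀ a, 0 < πb a → qhat a = q a) :
    ∑ a, πb a * ∑ r, pr a r *
        ((∑ a', πe a' * qhat a') + (if 0 < πb a then πe a / πb a else 0) * (rv r - qhat a))
      = ∑ a, πe a * qhat a := by
  calc _ = ∑ a, πb a * ∑ a', πe a' * qhat a' := by
          refine sum_congr rfl fun a _ => ?_
          rw [sum_mul_add_mul_sub _ _ _ _ _ (hprsum a), ← hq]
          exact mul_add_ite_div_mul_eq fun hb => by rw [hperfect a hb, sub_self]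
    _ = ∑ a, πe a * qhat a := by rw [← sum_mul, hπbsum, one_mul]

theorem dr_unbiased_perfect_model_general {X A R : Type*} [Fintype X] [Fintype A] [Fintype R]
    (p : X → ℝ) (πb πe : X → A → ℝ) (pr : X → A → R → ℝ) (rv : R → ℝ)
    (q qhat : X → A → ℝ)
    (hπbsum : ∀ x, ∑ a, πb x a = 1)
    (hprsum : ∀ x a, ∑ r, pr x a r = 1)
    (hq : ∀ x a, q x a = ∑ r, pr x a r * rv r)
    (hperfect : ∀ x a, 0 < πb x a → qhat x a = q x a) :
    (∑ x, p x * ∑ a, πb x a * ∑ r, pr x a r *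
        ((∑ a', πe x a' * qhat x a')
          + (if 0 < πb x a then πe x a / πb x a else 0) * (rv r - qhat x a))
      = ∑ x, p x * ∑ a, πe x a * qhat x a)
    ∧ ((∀ x a, qhat x a = q x a) →
        ∑ x, p x * ∑ a, πb x a * ∑ r, pr x a r *
            ((∑ a', πe x a' * qhat x a')
              + (if 0 < πb x a then πe x a / πb x a else 0) * (rv r - qhat x a))
          = ∑ x, p x * ∑ a, πe x a * q x a) := by
  have hdr : ∑ x, p x * ∑ a, πb x a * ∑ r, pr x a r *
        ((∑ a', πe x a' * qhat x a')
          + (if 0 < πb x a then πe x a / πb x a else 0) * (rv r - qhat x a))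
      = ∑ x, p x * ∑ a, πe x a * qhat x a :=
    sum_congr rfl fun x _ => by
      rw [dr_expectation_eq_direct _ _ _ _ _ _ (hπbsum x) (hprsum x) (hq x) (hperfect x)]
  exact ⟨hdr, fun hqhat => hdr.trans <| by simp only [hqhat]⟩

/-- The Doubly Robust estimator is unbiased under perfect model estimation on the behavior
support, even without common support.  The weight is `πe/πb` when `πb > 0` and the
corresponding term has probability zero otherwise. -/
theorem dr_unbiased_perfect_model {X A R : Type*} [Fintype X] [Fintype A] [Fintype R]
    (p : X → ℝ) (πb πe : X → A → ℝ) (pr : X → A → R → ℝ) (rv : R → ℝ)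
    (q qhat : X → A → ℝ)
    (hp : ∀ x, 0 ≤ p x) (hpsum : ∑ x, p x = 1)
    (hπb : ∀ x a, 0 ≤ πb x a) (hπbsum : ∀ x, ∑ a, πb x a = 1)
    (hπe : ∀ x a, 0 ≤ πe x a) (hπesum : ∀ x, ∑ a, πe x a = 1)
    (hpr : ∀ x a r, 0 ≤ pr x a r) (hprsum : ∀ x a, ∑ r, pr x a r = 1)
    (hq : ∀ x a, q x a = ∑ r, pr x a r * rv r)
    (hperfect : ∀ x a, 0 < πb x a → qhat x a = q x a) :
    (∑ x, p x * ∑ a, πb x a * ∑ r, pr x a r *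
        ((∑ a', πe x a' * qhat x a')
          + (if 0 < πb x a then πe x a / πb x a else 0) * (rv r - qhat x a))
      = ∑ x, p x * ∑ a, πe x a * qhat x a)
    ∧ ((∀ x a, qhat x a = q x a) →
        ∑ x, p x * ∑ a, πb x a * ∑ r, pr x a r *
            ((∑ a', πe x a' * qhat x a')
              + (if 0 < πb x a then πe x a / πb x a else 0) * (rv r - qhat x a))
          = ∑ x, p x * ∑ a, πe x a * q x a) :=
  dr_unbiased_perfect_model_general p πb πe pr rv q qhat hπbsum hprsum hq hperfect
end

section
/- The MIPS estimator is unbiased: under the no-direct-effect assumption (the conditional reward mean given (x,a,e) depends only on (x,e), i.e. q(x,a,e) = q(x,e)) and common embedding support (p(e|x,π_e) > 0 implies p(e|x,π_b) > 0), the expectation over (x,a,e,r) ~ p(x)π_b(a|x)p(e|x,a)p(r|x,a,e) of w(x,e)·r, where w(x,e) = p(e|x,π_e)/p(e|x,π_b) and p(e|x,π) = ∑_a π(a|x)p(e|x,a), equals V(π_e) = E_{p(x)π_e(a|x)p(e|x,a)}[q(x,a,e)]. -/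
/-!
Under no direct effect the reward seen after embedding `e` has mean `qe x e` whatever the action,
so the action enters only through the embedding distribution. Summing out the action turns the
behaviour-policy expectation into one against the marginal `p(e|x,π_b)`; multiplying by the
marginal weight replaces it by `p(e|x,π_e)`, and common support guarantees that no mass of `π_e`
is lost where `p(e|x,π_b) = 0` (there the division returns the junk value `0`).
-/

open Finset

lemma mul_div_cancel_of_pos_imp_pos {a b : ℝ} (ha : 0 ≤ a) (hab : 0 < a → 0 < b) :
    b * (a / b) = a := by
  rcases ha.eq_or_lt with rfl | ha
  · simp
  · exact mul_div_cancel₀ a (hab ha).ne'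

section ImportanceWeighting

variable {A E : Type*} [Fintype A] [Fintype E]

lemma sum_mul_sum_eq_sum_marginal_mul (π : A → ℝ) (pe : A → E → ℝ) (g : E → ℝ) :
    ∑ a, π a * ∑ e, pe a e * g e = ∑ e, (∑ a, π a * pe a e) * g e := by
  simp only [mul_sum, sum_mul, mul_assoc]
  exact sum_comm

lemma sum_mul_sum_marginal_weight (πb πe : A → ℝ) (pe : A → E → ℝ) (w g : E → ℝ)
    (hw : ∀ e, (∑ a, πb a * pe a e) * w e = ∑ a, πe a * pe a e) :
    ∑ a, πb a * ∑ e, pe a e * (w e * g e) = ∑ a, πe a * ∑ e, pe a e * g e := by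
  simp only [sum_mul_sum_eq_sum_marginal_mul]
  exact sum_congr rfl fun e _ => by rw [← mul_assoc, hw]

end ImportanceWeighting

theorem mips_unbiased_general {X A E R : Type*} [Fintype X] [Fintype A] [Fintype E] [Fintype R]
    (p : X → ℝ) (πb πe : X → A → ℝ) (pe : X → A → E → ℝ)
    (pr : X → A → E → R → ℝ) (rv : R → ℝ) (q : X → A → E → ℝ) (qe : X → E → ℝ)
    (pm : (X → A → ℝ) → X → E → ℝ)
    (hπe : ∀ x a, 0 ≤ πe x a)
    (hpe : ∀ x a e, 0 ≤ pe x a e)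
    (hq : ∀ x a e, q x a e = ∑ r, pr x a e r * rv r)
    (hpm : ∀ π x e, pm π x e = ∑ a, π x a * pe x a e)
    (hnde : ∀ x a e, q x a e = qe x e)
    (hembsupport : ∀ x e, 0 < pm πe x e → 0 < pm πb x e) :
    ∑ x, p x * ∑ a, πb x a * ∑ e, pe x a e * ∑ r, pr x a e r *
        (pm πe x e / pm πb x e * rv r)
      = ∑ x, p x * ∑ a, πe x a * ∑ e, pe x a e * q x a e := by
  have hweight : ∀ x e, pm πb x e * (pm πe x e / pm πb x e) = pm πe x e := fun x e =>
    mul_div_cancel_of_pos_imp_pos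
      (hpm πe x e ▸ sum_nonneg fun a _ => mul_nonneg (hπe x a) (hpe x a e)) (hembsupport x e)
  have hreward : ∀ x a e, ∑ r, pr x a e r * (pm πe x e / pm πb x e * rv r)
      = pm πe x e / pm πb x e * qe x e := by
    intro x a e
    rw [← hnde x a e, hq, mul_sum]
    exact sum_congr rfl fun r _ => by ring
  refine sum_congr rfl fun x _ => congrArg (p x * ·) ?_
  simp only [hreward, hnde]
  exact sum_mul_sum_marginal_weight _ _ _ _ _ fun e => by simpa only [hpm] using hweight x e

/-- Unbiasedness of MIPS: under no direct effect of the action on the reward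
(`q x a e = qe x e`) and common embedding support, marginal importance weighting
recovers the policy value.  `pe x a e` is the embedding kernel, `pm π x e` the
marginal embedding distribution. -/
theorem mips_unbiased {X A E R : Type*} [Fintype X] [Fintype A] [Fintype E] [Fintype R]
    (p : X → ℝ) (πb πe : X → A → ℝ) (pe : X → A → E → ℝ)
    (pr : X → A → E → R → ℝ) (rv : R → ℝ) (q : X → A → E → ℝ) (qe : X → E → ℝ)
    (pm : (X → A → ℝ) → X → E → ℝ)
    (hp : ∀ x, 0 ≤ p x) (hpsum : ∑ x, p x = 1)
    (hπb : ∀ x a, 0 ≤ πb x a) (hπbsum : ∀ x, ∑ a, πb x a = 1)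
    (hπe : ∀ x a, 0 ≤ πe x a) (hπesum : ∀ x, ∑ a, πe x a = 1)
    (hpe : ∀ x a e, 0 ≤ pe x a e) (hpesum : ∀ x a, ∑ e, pe x a e = 1)
    (hpr : ∀ x a e r, 0 ≤ pr x a e r) (hprsum : ∀ x a e, ∑ r, pr x a e r = 1)
    (hq : ∀ x a e, q x a e = ∑ r, pr x a e r * rv r)
    (hpm : ∀ π x e, pm π x e = ∑ a, π x a * pe x a e)
    (hnde : ∀ x a e, q x a e = qe x e)
    (hembsupport : ∀ x e, 0 < pm πe x e → 0 < pm πb x e) :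
    ∑ x, p x * ∑ a, πb x a * ∑ e, pe x a e * ∑ r, pr x a e r *
        (pm πe x e / pm πb x e * rv r)
      = ∑ x, p x * ∑ a, πe x a * ∑ e, pe x a e * q x a e :=
  mips_unbiased_general p πb πe pe pr rv q qe pm hπe hpe hq hpm hnde hembsupport
end

section
/- Under common embedding support and no direct effect of the action on the reward (q(x,a,e) = q(x,e) for all a), the expectation under the behavior policy of the marginally weighted model correction vanishes: E_{p(x)π_b(a|x)p(e|x,a)}[ w(x,e)·q̂(x,e) ] = E_{p(x)π_e(a|x)p(e|x,a)}[ q̂(x,e) ], for any function q̂ : X × E → ℝ. -/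
/-!
Both sides only see the action through the marginal embedding distribution: exchanging the sums
over actions and embeddings turns `∑ a, π(a|x) ∑ e, p(e|x,a) g(e)` into `∑ e, p(e|x,π) g(e)`.
On the behavior side `g = w · q̂`, and `p(e|x,π_b) · w(x,e) = p(e|x,π_e)` holds at every `e`:
where `p(e|x,π_b) = 0`, common support and nonnegativity force `p(e|x,π_e) = 0` as well.
-/

open Finset

theorem sum_mul_sum_mul_eq_sum_sum_mul {A E R : Type*} [Fintype A] [Fintype E]
    [CommSemiring R] (π : A → R) (k : A → E → R) (g : E → R) :
    ∑ a, π a * ∑ e, k a e * g e = ∑ e, (∑ a, π a * k a e) * g e := by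
  simp only [mul_sum, sum_mul, mul_assoc]
  exact sum_comm

theorem mips_weight_switch_general {X A E : Type*} [Fintype X] [Fintype A] [Fintype E]
    (p : X → ℝ) (πb πe : X → A → ℝ) (pe : X → A → E → ℝ)
    (qhat : X → E → ℝ)
    (pm : (X → A → ℝ) → X → E → ℝ)
    (hπe : ∀ x a, 0 ≤ πe x a)
    (hpe : ∀ x a e, 0 ≤ pe x a e)
    (hpm : ∀ π x e, pm π x e = ∑ a, π x a * pe x a e)
    (hembsupport : ∀ x e, 0 < pm πe x e → 0 < pm πb x e) :
    ∑ x, p x * ∑ a, πb x a * ∑ e, pe x a e * (pm πe x e / pm πb x e * qhat x e)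
      = ∑ x, p x * ∑ a, πe x a * ∑ e, pe x a e * qhat x e := by
  refine sum_congr rfl fun x _ => congrArg (p x * ·) ?_
  simp only [sum_mul_sum_mul_eq_sum_sum_mul, ← hpm]
  refine sum_congr rfl fun e _ => ?_
  have hb_zero_imp : pm πb x e = 0 → pm πe x e = 0 := fun hb =>
    le_antisymm (not_lt.mp fun he => (hembsupport x e he).ne' hb)
      (hpm πe x e ▸ sum_nonneg fun a _ => mul_nonneg (hπe x a) (hpe x a e))
  rw [← mul_assoc, mul_div_cancel_of_imp' hb_zero_imp]

/-- Under common embedding support and no direct effect, the marginally weighted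
expectation of any `qhat : X × E → ℝ` under the behavior policy equals its
expectation under the evaluation policy. -/
theorem mips_weight_switch {X A E : Type*} [Fintype X] [Fintype A] [Fintype E]
    (p : X → ℝ) (πb πe : X → A → ℝ) (pe : X → A → E → ℝ)
    (q : X → A → E → ℝ) (qe : X → E → ℝ) (qhat : X → E → ℝ)
    (pm : (X → A → ℝ) → X → E → ℝ)
    (hp : ∀ x, 0 ≤ p x) (hpsum : ∑ x, p x = 1)
    (hπb : ∀ x a, 0 ≤ πb x a) (hπbsum : ∀ x, ∑ a, πb x a = 1)
    (hπe : ∀ x a, 0 ≤ πe x a) (hπesum : ∀ x, ∑ a, πe x a = 1)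
    (hpe : ∀ x a e, 0 ≤ pe x a e) (hpesum : ∀ x a, ∑ e, pe x a e = 1)
    (hpm : ∀ π x e, pm π x e = ∑ a, π x a * pe x a e)
    (hnde : ∀ x a e, q x a e = qe x e)
    (hembsupport : ∀ x e, 0 < pm πe x e → 0 < pm πb x e) :
    ∑ x, p x * ∑ a, πb x a * ∑ e, pe x a e * (pm πe x e / pm πb x e * qhat x e)
      = ∑ x, p x * ∑ a, πe x a * ∑ e, pe x a e * qhat x e :=
  mips_weight_switch_general p πb πe pe qhat pm hπe hpe hpm hembsupport
end

section
/- The MDR estimator is unbiased under no direct effect and common embedding support: if q(x,a,e) = q(x,e) for all a and p(e|x,π_e) > 0 implies p(e|x,π_b) > 0, then for any models q̂(x,a) and q̂(x,a,e) with q̂(x,a) = ∑_e p(e|x,a) q̂(x,a,e) and q̂(x,a,e) depending only on (x,e), E_{p(x)π_b(a|x)p(e|x,a)p(r|x,a,e)}[ ∑_{a'} π_e(a'|x) q̂(x,a') + w(x,e)(r − q̂(x,a,e)) ] = V(π_e). -/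
/-!
Conditioning on `(x, e)`, the reward no longer depends on the action, so reweighting the
logged embedding distribution `p(e|x,π_b)` by `w(x,e)` turns the correction term into an
expectation under `p(e|x,π_e)`; common support makes this reweighting exact. The correction
then equals `∑ₑ p(e|x,π_e) (q(x,e) - q̂(x,e))`, and the consistency of `q̂(x,a)` with `q̂(x,a,e)`
makes the direct-method term cancel the `q̂` part, leaving `V(π_e)`.
-/

open Finset

section FiniteSums

variable {ι κ S : Type*} [Fintype ι] [Fintype κ]

theorem sum_mul_const_add_of_sum_eq_one [CommSemiring S] {μ : ι → S} (hμ : ∑ i, μ i = 1) (c : S)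
    (f : ι → S) :
    ∑ i, μ i * (c + f i) = c + ∑ i, μ i * f i := by
  simp_rw [mul_add, sum_add_distrib, ← sum_mul, hμ, one_mul]

theorem sum_mul_affine_of_sum_eq_one [CommRing S] {μ : ι → S} (hμ : ∑ i, μ i = 1) (c w b : S)
    (f : ι → S) :
    ∑ i, μ i * (c + w * (f i - b)) = c + w * (∑ i, μ i * f i - b) := by
  have hw : ∀ i, μ i * (c + w * (f i - b)) = μ i * (c - w * b) + w * (μ i * f i) :=
    fun i => by ring
  simp_rw [hw, sum_add_distrib, ← sum_mul, ← mul_sum, hμ]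
  ring

theorem sum_mul_sum_mul_eq_sum_marginal_mul [Semiring S] (π : ι → S) (K : ι → κ → S) (f : κ → S) :
    ∑ i, π i * ∑ k, K i k * f k = ∑ k, (∑ i, π i * K i k) * f k := by
  simp_rw [mul_sum, sum_mul, mul_assoc]
  exact sum_comm

theorem sum_mul_div_mul_of_imp_s6 [Field S] {pb pt : κ → S} (h : ∀ k, pb k = 0 → pt k = 0)
    (g : κ → S) :
    ∑ k, pb k * (pt k / pb k * g k) = ∑ k, pt k * g k := by
  simp_rw [← mul_assoc, mul_div_cancel_of_imp' (h _)]

end FiniteSums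

theorem mdr_unbiased_nde_general {X A E R : Type*} [Fintype X] [Fintype A] [Fintype E] [Fintype R]
    (p : X → ℝ) (πb πe : X → A → ℝ) (pe : X → A → E → ℝ)
    (pr : X → A → E → R → ℝ) (rv : R → ℝ) (q : X → A → E → ℝ) (qe : X → E → ℝ)
    (qhatA : X → A → ℝ) (qhatE : X → E → ℝ)
    (pm : (X → A → ℝ) → X → E → ℝ)
    (hπbsum : ∀ x, ∑ a, πb x a = 1)
    (hπe : ∀ x a, 0 ≤ πe x a)
    (hpe : ∀ x a e, 0 ≤ pe x a e) (hpesum : ∀ x a, ∑ e, pe x a e = 1)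
    (hprsum : ∀ x a e, ∑ r, pr x a e r = 1)
    (hq : ∀ x a e, q x a e = ∑ r, pr x a e r * rv r)
    (hpm : ∀ π x e, pm π x e = ∑ a, π x a * pe x a e)
    (hnde : ∀ x a e, q x a e = qe x e)
    (hembsupport : ∀ x e, 0 < pm πe x e → 0 < pm πb x e)
    (hconsistent : ∀ x a, qhatA x a = ∑ e, pe x a e * qhatE x e) :
    ∑ x, p x * ∑ a, πb x a * ∑ e, pe x a e * ∑ r, pr x a e r *
        ((∑ a', πe x a' * qhatA x a')
          + pm πe x e / pm πb x e * (rv r - qhatE x e))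
      = ∑ x, p x * ∑ a, πe x a * ∑ e, pe x a e * q x a e := by
  refine sum_congr rfl fun x _ => congrArg (p x * ·) ?_
  have hsupp : ∀ e, pm πb x e = 0 → pm πe x e = 0 := fun e hb => by
    have hnonneg : 0 ≤ pm πe x e :=
      (hpm πe x e).symm ▸ sum_nonneg fun a _ => mul_nonneg (hπe x a) (hpe x a e)
    by_contra hne
    exact (hembsupport x e (lt_of_le_of_ne hnonneg (Ne.symm hne))).ne' hb
  set C := ∑ a', πe x a' * qhatA x a'
  have hC : C = ∑ e, pm πe x e * qhatE x e := by
    simp_rw [C, hconsistent, sum_mul_sum_mul_eq_sum_marginal_mul, hpm]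
  calc _ = ∑ a, πb x a * ∑ e, pe x a e *
          (C + pm πe x e / pm πb x e * (qe x e - qhatE x e)) := by
        simp_rw [sum_mul_affine_of_sum_eq_one (hprsum x _ _), ← hq, hnde]
    _ = C + ∑ e, pm πb x e * (pm πe x e / pm πb x e * (qe x e - qhatE x e)) := by
        simp_rw [sum_mul_const_add_of_sum_eq_one (hpesum x _),
          sum_mul_const_add_of_sum_eq_one (hπbsum x), sum_mul_sum_mul_eq_sum_marginal_mul, hpm]
    _ = ∑ e, pm πe x e * qe x e := by
        rw [sum_mul_div_mul_of_imp_s6 hsupp, hC, ← sum_add_distrib]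
        exact sum_congr rfl fun e _ => by ring
    _ = _ := by
        simp_rw [hnde, sum_mul_sum_mul_eq_sum_marginal_mul, hpm]

/-- Unbiasedness of MDR under no direct effect and common embedding support.
The model `qhatE` depends only on `(x, e)` (no direct effect of the action in the model)
and `qhatA x a = ∑ e, pe x a e * qhatE x e` is its action-level aggregation. -/
theorem mdr_unbiased_nde {X A E R : Type*} [Fintype X] [Fintype A] [Fintype E] [Fintype R]
    (p : X → ℝ) (πb πe : X → A → ℝ) (pe : X → A → E → ℝ)
    (pr : X → A → E → R → ℝ) (rv : R → ℝ) (q : X → A → E → ℝ) (qe : X → E → ℝ)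
    (qhatA : X → A → ℝ) (qhatE : X → E → ℝ)
    (pm : (X → A → ℝ) → X → E → ℝ)
    (hp : ∀ x, 0 ≤ p x) (hpsum : ∑ x, p x = 1)
    (hπb : ∀ x a, 0 ≤ πb x a) (hπbsum : ∀ x, ∑ a, πb x a = 1)
    (hπe : ∀ x a, 0 ≤ πe x a) (hπesum : ∀ x, ∑ a, πe x a = 1)
    (hpe : ∀ x a e, 0 ≤ pe x a e) (hpesum : ∀ x a, ∑ e, pe x a e = 1)
    (hpr : ∀ x a e r, 0 ≤ pr x a e r) (hprsum : ∀ x a e, ∑ r, pr x a e r = 1)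
    (hq : ∀ x a e, q x a e = ∑ r, pr x a e r * rv r)
    (hpm : ∀ π x e, pm π x e = ∑ a, π x a * pe x a e)
    (hnde : ∀ x a e, q x a e = qe x e)
    (hembsupport : ∀ x e, 0 < pm πe x e → 0 < pm πb x e)
    (hconsistent : ∀ x a, qhatA x a = ∑ e, pe x a e * qhatE x e) :
    ∑ x, p x * ∑ a, πb x a * ∑ e, pe x a e * ∑ r, pr x a e r *
        ((∑ a', πe x a' * qhatA x a')
          + pm πe x e / pm πb x e * (rv r - qhatE x e))
      = ∑ x, p x * ∑ a, πe x a * ∑ e, pe x a e * q x a e :=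
  mdr_unbiased_nde_general p πb πe pe pr rv q qe qhatA qhatE pm hπbsum hπe hpe hpesum hprsum hq hpm
    hnde hembsupport hconsistent
end

section
/- The MDR estimator is unbiased under perfect model estimation: if q̂(x,a,e) = q(x,a,e) for all (x,a,e) in the support of p(x)π_b(a|x)p(e|x,a), and q̂(x,a) := ∑_e p(e|x,a)q̂(x,a,e) equals q(x,a) for all (x,a) in the support of p(x)π_e(a|x), then E_{p(x)π_b(a|x)p(e|x,a)p(r|x,a,e)}[ ∑_{a'} π_e(a'|x) q̂(x,a') + w(x,e)(r − q̂(x,a,e)) ] = V(π_e), for any weight function w : X × E → ℝ. -/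
/-!
Conditioning on `(x, a, e)`, the correction `w x e * (r - qhat3 x a e)` has mean zero wherever
`qhat3` is the true conditional mean of the reward, so the estimator reduces to the direct term
`∑ a', πe x a' * qhatA x a'`, which is the same for every `(a, e)` and hence survives averaging over
`πb` and `pe` unchanged. Averaging over `πe` only sees `qhatA` where `p x * πe x a > 0`, where it
equals `qA`.
-/

open Finset

section WeightedSums

variable {ι 𝕜 : Type*} [Semiring 𝕜] [PartialOrder 𝕜] {s : Finset ι} {μ : ι → 𝕜}

theorem sum_mul_congr_of_pos (hμ : ∀ i ∈ s, 0 ≤ μ i) {f g : ι → 𝕜}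
    (hfg : ∀ i ∈ s, 0 < μ i → f i = g i) :
    ∑ i ∈ s, μ i * f i = ∑ i ∈ s, μ i * g i := by
  refine sum_congr rfl fun i hi => ?_
  rcases (hμ i hi).eq_or_lt with hzero | hpos
  · simp [← hzero]
  · rw [hfg i hi hpos]

theorem sum_mul_eq_of_pos (hμ : ∀ i ∈ s, 0 ≤ μ i) (hμsum : ∑ i ∈ s, μ i = 1) {f : ι → 𝕜} {c : 𝕜}
    (hf : ∀ i ∈ s, 0 < μ i → f i = c) :
    ∑ i ∈ s, μ i * f i = c := by
  rw [sum_mul_congr_of_pos hμ hf, ← sum_mul, hμsum, one_mul]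

end WeightedSums

theorem sum_mul_add_mul_sub_sum_mul_eq {ι 𝕜 : Type*} [CommRing 𝕜] {s : Finset ι} {μ : ι → 𝕜}
    (hμsum : ∑ i ∈ s, μ i = 1) (f : ι → 𝕜) (c w : 𝕜) :
    ∑ i ∈ s, μ i * (c + w * (f i - ∑ j ∈ s, μ j * f j)) = c := by
  simp only [mul_add, mul_sub, sum_add_distrib, sum_sub_distrib, ← sum_mul, hμsum, mul_left_comm _ w,
    ← mul_sum]
  ring

theorem mdr_unbiased_perfect_model_general {X A E R : Type*} [Fintype X] [Fintype A] [Fintype E] [Fintype R]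
    (p : X → ℝ) (πb πe : X → A → ℝ) (pe : X → A → E → ℝ)
    (pr : X → A → E → R → ℝ) (rv : R → ℝ) (q3 qhat3 : X → A → E → ℝ)
    (qA qhatA : X → A → ℝ) (w : X → E → ℝ)
    (hp : ∀ x, 0 ≤ p x)
    (hπb : ∀ x a, 0 ≤ πb x a) (hπbsum : ∀ x, ∑ a, πb x a = 1)
    (hπe : ∀ x a, 0 ≤ πe x a)
    (hpe : ∀ x a e, 0 ≤ pe x a e) (hpesum : ∀ x a, ∑ e, pe x a e = 1)
    (hprsum : ∀ x a e, ∑ r, pr x a e r = 1)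
    (hq3 : ∀ x a e, q3 x a e = ∑ r, pr x a e r * rv r)
    (hperfect3 : ∀ x a e, 0 < p x * πb x a * pe x a e → qhat3 x a e = q3 x a e)
    (hperfectA : ∀ x a, 0 < p x * πe x a → qhatA x a = qA x a) :
    ∑ x, p x * ∑ a, πb x a * ∑ e, pe x a e * ∑ r, pr x a e r *
        ((∑ a', πe x a' * qhatA x a') + w x e * (rv r - qhat3 x a e))
      = ∑ x, p x * ∑ a, πe x a * qA x a := by
  calc _ = ∑ x, p x * ∑ a', πe x a' * qhatA x a' :=
        sum_mul_congr_of_pos (fun x _ => hp x) fun x _ hx =>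
          sum_mul_eq_of_pos (fun a _ => hπb x a) (hπbsum x) fun a _ ha =>
            sum_mul_eq_of_pos (fun e _ => hpe x a e) (hpesum x a) fun e _ he => by
              rw [hperfect3 x a e (by positivity), hq3]
              exact sum_mul_add_mul_sub_sum_mul_eq (hprsum x a e) _ _ _
    _ = _ :=
        sum_mul_congr_of_pos (fun x _ => hp x) fun x _ hx =>
          sum_mul_congr_of_pos (fun a _ => hπe x a) fun a _ ha => hperfectA x a (by positivity)

/-- Unbiasedness of MDR under perfect model estimation, for an arbitrary weight
function `w : X → E → ℝ`: the model `qhat3` agrees with the true conditional mean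
`q3` on the support of `p(x)πb(a|x)pe(e|x,a)`, and its aggregation `qhatA` agrees
with `qA` on the support of `p(x)πe(a|x)`. -/
theorem mdr_unbiased_perfect_model {X A E R : Type*} [Fintype X] [Fintype A] [Fintype E] [Fintype R]
    (p : X → ℝ) (πb πe : X → A → ℝ) (pe : X → A → E → ℝ)
    (pr : X → A → E → R → ℝ) (rv : R → ℝ) (q3 qhat3 : X → A → E → ℝ)
    (qA qhatA : X → A → ℝ) (w : X → E → ℝ)
    (hp : ∀ x, 0 ≤ p x) (hpsum : ∑ x, p x = 1)
    (hπb : ∀ x a, 0 ≤ πb x a) (hπbsum : ∀ x, ∑ a, πb x a = 1)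
    (hπe : ∀ x a, 0 ≤ πe x a) (hπesum : ∀ x, ∑ a, πe x a = 1)
    (hpe : ∀ x a e, 0 ≤ pe x a e) (hpesum : ∀ x a, ∑ e, pe x a e = 1)
    (hpr : ∀ x a e r, 0 ≤ pr x a e r) (hprsum : ∀ x a e, ∑ r, pr x a e r = 1)
    (hq3 : ∀ x a e, q3 x a e = ∑ r, pr x a e r * rv r)
    (hqA : ∀ x a, qA x a = ∑ e, pe x a e * q3 x a e)
    (hqhatA : ∀ x a, qhatA x a = ∑ e, pe x a e * qhat3 x a e)
    (hperfect3 : ∀ x a e, 0 < p x * πb x a * pe x a e → qhat3 x a e = q3 x a e)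
    (hperfectA : ∀ x a, 0 < p x * πe x a → qhatA x a = qA x a) :
    ∑ x, p x * ∑ a, πb x a * ∑ e, pe x a e * ∑ r, pr x a e r *
        ((∑ a', πe x a' * qhatA x a') + w x e * (rv r - qhat3 x a e))
      = ∑ x, p x * ∑ a, πe x a * qA x a :=
  mdr_unbiased_perfect_model_general p πb πe pe pr rv q3 qhat3 qA qhatA w hp hπb hπbsum hπe hpe
    hpesum hprsum hq3 hperfect3 hperfectA
end

section
/- Marginal weight averages vanilla weight: under common support, for all x and e with p(e|x,π_b) > 0, the marginal importance weight satisfies w(x,e) = E_{π_b(a|x,e)}[w(x,a)], i.e., p(e|x,π_e)/p(e|x,π_b) = ∑_a [π_b(a|x)p(e|x,a)/p(e|x,π_b)] · [π_e(a|x)/π_b(a|x)]. -/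
/-!
Writing `p(e|x,π_e) = ∑_a π_e(a|x) p(e|x,a)` and inserting `π_b(a|x) · (π_e(a|x) / π_b(a|x))`
for `π_e(a|x)` turns the ratio into the posterior average. Common support is exactly what makes
this insertion valid: where `π_b(a|x) = 0` also `π_e(a|x) = 0`, so the junk value `π_e/0 = 0`
does no harm.
-/

theorem eq_zero_of_pos_imp_pos {α : Type*} [LinearOrder α] [Zero α] {a b : α} (ha : 0 ≤ a)
    (hab : 0 < a → 0 < b) (hb : b = 0) : a = 0 :=
  le_antisymm (not_lt.mp fun h => (hab h).ne' hb) ha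

theorem Finset.sum_mul_div_eq_sum_mul_div_mul_div {ι 𝕜 : Type*} [Field 𝕜] (s : Finset ι)
    {p q k : ι → 𝕜} (c : 𝕜) (hpq : ∀ i ∈ s, q i = 0 → p i = 0) :
    (∑ i ∈ s, p i * k i) / c = ∑ i ∈ s, (q i * k i / c) * (p i / q i) := by
  rw [Finset.sum_div]
  refine Finset.sum_congr rfl fun i hi => ?_
  linear_combination (-(k i / c)) * mul_div_cancel_of_imp' (hpq i hi)

theorem marginal_weight_is_posterior_mean_general {X A E : Type*} [Fintype A]
    (πb πe : X → A → ℝ) (pe : X → A → E → ℝ)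
    (pm : (X → A → ℝ) → X → E → ℝ)
    (hπe : ∀ x a, 0 ≤ πe x a)
    (hpm : ∀ π x e, pm π x e = ∑ a, π x a * pe x a e)
    (hsupport : ∀ x a, 0 < πe x a → 0 < πb x a) :
    ∀ x e, 0 < pm πb x e →
      pm πe x e / pm πb x e
        = ∑ a, (πb x a * pe x a e / pm πb x e) * (πe x a / πb x a) := by
  intro x e _
  rw [hpm πe]
  exact Finset.sum_mul_div_eq_sum_mul_div_mul_div _ _ fun a _ =>
    eq_zero_of_pos_imp_pos (hπe x a) (hsupport x a)

/-- The marginal importance weight is the posterior mean of the vanilla importance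
weight: for any `x` and any `e` with `p(e|x,πb) > 0`,
`w(x,e) = ∑_a πb(a|x,e) w(x,a)` where `πb(a|x,e) = πb(a|x)p(e|x,a)/p(e|x,πb)`. -/
theorem marginal_weight_is_posterior_mean {X A E : Type*} [Fintype X] [Fintype A] [Fintype E]
    (πb πe : X → A → ℝ) (pe : X → A → E → ℝ)
    (pm : (X → A → ℝ) → X → E → ℝ)
    (hπb : ∀ x a, 0 ≤ πb x a) (hπbsum : ∀ x, ∑ a, πb x a = 1)
    (hπe : ∀ x a, 0 ≤ πe x a) (hπesum : ∀ x, ∑ a, πe x a = 1)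
    (hpe : ∀ x a e, 0 ≤ pe x a e)
    (hpm : ∀ π x e, pm π x e = ∑ a, π x a * pe x a e)
    (hsupport : ∀ x a, 0 < πe x a → 0 < πb x a) :
    ∀ x e, 0 < pm πb x e →
      pm πe x e / pm πb x e
        = ∑ a, (πb x a * pe x a e / pm πb x e) * (πe x a / πb x a) :=
  marginal_weight_is_posterior_mean_general πb πe pe pm hπe hpm hsupport
end

section
/- Second moment of marginal weight is no larger than that of vanilla weight: under common support, E_{p(x)π_b(a|x)p(e|x,a)}[w(x,e)²] ≤ E_{p(x)π_b(a|x)}[w(x,a)²], where w(x,e) = p(e|x,π_e)/p(e|x,π_b) and w(x,a) = π_e(a|x)/π_b(a|x). -/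
/-! For fixed `x` and `e`, the marginal weight `w(x,e)` is the mean of `w(x,a)` under the
posterior weights `πb(a|x) p(e|x,a)` (this is where common support enters), so by Jensen
(Cauchy–Schwarz) `w(x,e)²` is at most the posterior mean of `w(x,a)²`. Averaging over `e`
with weights `p(e|x,πb)` turns the posterior back into `πb(a|x)`. -/

open Finset

theorem Finset.sum_mul_sq_weighted_mean_le {ι : Type*} (s : Finset ι) {g : ι → ℝ}
    (hg : ∀ i ∈ s, 0 ≤ g i) (w : ι → ℝ) :
    (∑ i ∈ s, g i) * ((∑ i ∈ s, g i * w i) / ∑ i ∈ s, g i) ^ 2 ≤ ∑ i ∈ s, g i * w i ^ 2 := by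
  have hsq : ∀ i ∈ s, 0 ≤ g i * w i ^ 2 := fun i hi => mul_nonneg (hg i hi) (sq_nonneg _)
  obtain hzero | hpos := (sum_nonneg hg).eq_or_lt'
  · rw [hzero, zero_mul]
    exact sum_nonneg hsq
  have cauchy_schwarz : (∑ i ∈ s, g i * w i) ^ 2 ≤ (∑ i ∈ s, g i * w i ^ 2) * ∑ i ∈ s, g i :=
    sum_sq_le_sum_mul_sum_of_sq_le_mul s hsq hg fun i _ =>
      (by ring : (g i * w i) ^ 2 = g i * w i ^ 2 * g i).le
  calc (∑ i ∈ s, g i) * ((∑ i ∈ s, g i * w i) / ∑ i ∈ s, g i) ^ 2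
      = (∑ i ∈ s, g i * w i) ^ 2 / ∑ i ∈ s, g i := by field_simp
    _ ≤ ∑ i ∈ s, g i * w i ^ 2 := div_le_of_le_mul₀ hpos.le (sum_nonneg hsq) cauchy_schwarz

theorem marginal_second_moment_le_of_support {A E : Type*} [Fintype A] [Fintype E]
    (b c : A → ℝ) (q : A → E → ℝ) (hb : ∀ a, 0 ≤ b a) (hc : ∀ a, 0 ≤ c a)
    (hq : ∀ a e, 0 ≤ q a e) (hqsum : ∀ a, ∑ e, q a e = 1) (hsupport : ∀ a, 0 < c a → 0 < b a) :
    ∑ a, b a * ∑ e, q a e * ((∑ a', c a' * q a' e) / ∑ a', b a' * q a' e) ^ 2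
      ≤ ∑ a, b a * (c a / b a) ^ 2 := by
  set w : A → ℝ := fun a => c a / b a
  have hbw : ∀ a, b a * w a = c a := fun a =>
    mul_div_cancel_of_imp' fun h => by_contra fun hne => (hsupport a ((hc a).lt_of_ne' hne)).ne' h
  have hmarginal : ∀ e, ∑ a, c a * q a e = ∑ a, b a * q a e * w a := fun e =>
    sum_congr rfl fun a _ => by rw [← hbw a]; ring
  calc ∑ a, b a * ∑ e, q a e * ((∑ a', c a' * q a' e) / ∑ a', b a' * q a' e) ^ 2
      = ∑ e, (∑ a, b a * q a e) * ((∑ a, b a * q a e * w a) / ∑ a, b a * q a e) ^ 2 := by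
        simp_rw [hmarginal, mul_sum, sum_mul]
        rw [sum_comm]
        simp_rw [mul_assoc]
    _ ≤ ∑ e, ∑ a, b a * q a e * w a ^ 2 := sum_le_sum fun e _ =>
        sum_mul_sq_weighted_mean_le univ (fun a _ => mul_nonneg (hb a) (hq a e)) w
    _ = ∑ a, b a * w a ^ 2 := by
        rw [sum_comm]
        refine sum_congr rfl fun a _ => ?_
        rw [← mul_one (b a * w a ^ 2), ← hqsum a, mul_sum]
        exact sum_congr rfl fun e _ => by ring

theorem marginal_weight_second_moment_le_general {X A E : Type*} [Fintype X] [Fintype A] [Fintype E]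
    (p : X → ℝ) (πb πe : X → A → ℝ) (pe : X → A → E → ℝ)
    (pm : (X → A → ℝ) → X → E → ℝ)
    (hp : ∀ x, 0 ≤ p x)
    (hπb : ∀ x a, 0 ≤ πb x a)
    (hπe : ∀ x a, 0 ≤ πe x a)
    (hpe : ∀ x a e, 0 ≤ pe x a e) (hpesum : ∀ x a, ∑ e, pe x a e = 1)
    (hpm : ∀ π x e, pm π x e = ∑ a, π x a * pe x a e)
    (hsupport : ∀ x a, 0 < πe x a → 0 < πb x a) :
    ∑ x, p x * ∑ a, πb x a * ∑ e, pe x a e * (pm πe x e / pm πb x e) ^ 2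
      ≤ ∑ x, p x * ∑ a, πb x a * (πe x a / πb x a) ^ 2 := by
  simp_rw [hpm]
  exact sum_le_sum fun x _ => mul_le_mul_of_nonneg_left
    (marginal_second_moment_le_of_support (πb x) (πe x) (pe x) (hπb x) (hπe x) (hpe x)
      (hpesum x) (hsupport x)) (hp x)

/-- The second moment of the marginal importance weight is no larger than the
second moment of the vanilla importance weight. -/
theorem marginal_weight_second_moment_le {X A E : Type*} [Fintype X] [Fintype A] [Fintype E]
    (p : X → ℝ) (πb πe : X → A → ℝ) (pe : X → A → E → ℝ)
    (pm : (X → A → ℝ) → X → E → ℝ)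
    (hp : ∀ x, 0 ≤ p x) (hpsum : ∑ x, p x = 1)
    (hπb : ∀ x a, 0 ≤ πb x a) (hπbsum : ∀ x, ∑ a, πb x a = 1)
    (hπe : ∀ x a, 0 ≤ πe x a) (hπesum : ∀ x, ∑ a, πe x a = 1)
    (hpe : ∀ x a e, 0 ≤ pe x a e) (hpesum : ∀ x a, ∑ e, pe x a e = 1)
    (hpm : ∀ π x e, pm π x e = ∑ a, π x a * pe x a e)
    (hsupport : ∀ x a, 0 < πe x a → 0 < πb x a) :
    ∑ x, p x * ∑ a, πb x a * ∑ e, pe x a e * (pm πe x e / pm πb x e) ^ 2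
      ≤ ∑ x, p x * ∑ a, πb x a * (πe x a / πb x a) ^ 2 :=
  marginal_weight_second_moment_le_general p πb πe pe pm hp hπb hπe hpe hpesum hpm hsupport
end

section
/- Single-sample DR variance decomposition: Var_{p(x)π_b(a|x)p(r|x,a)}[ ∑_{a'}π_e(a'|x)q̂(x,a') + w(x,a)(r − q̂(x,a)) ] = E_{p(x)π_b(a|x)}[ w(x,a)²σ²(x,a) ] + Var_{p(x)}[ E_{π_b(a|x)}[w(x,a)q(x,a)] ] + E_{p(x)}[ Var_{π_b(a|x)}[w(x,a)Δ(x,a)] ], where Δ(x,a) = q(x,a) − q̂(x,a), under common support. -/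
/-!
Conditionally on `(x, a)` the DR estimand `B x + w (r - q̂)`, with baseline
`B x = ∑ a', π_e(a'|x) q̂(x, a')`, is affine in `r`: its mean is `B x + w Δ` and its variance
`w² σ²`. The law of total variance over `x` then leaves the between-context variance of
`B x + E_{π_b}[w Δ]` and the within-context variance of `w Δ`, the constant `B x` dropping out.
Common support gives the importance-sampling identity `E_{π_b}[w g] = E_{π_e}[g]`, which turns
`B x + E_{π_b}[w Δ]` into `E_{π_b}[w q]`.
-/

open Finset

section Weighted

variable {ι : Type*} [Fintype ι] (μ : ι → ℝ)

def weightedMean (f : ι → ℝ) : ℝ := ∑ i, μ i * f i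

def weightedVar (f : ι → ℝ) : ℝ := weightedMean μ (fun i => f i ^ 2) - weightedMean μ f ^ 2

variable {μ}

theorem sum_mul_eq_weightedMean (f : ι → ℝ) : ∑ i, μ i * f i = weightedMean μ f := rfl

theorem weightedMean_sq_sub_sq (f : ι → ℝ) :
    weightedMean μ (fun i => f i ^ 2) - weightedMean μ f ^ 2 = weightedVar μ f := rfl

theorem weightedMean_add (f g : ι → ℝ) :
    weightedMean μ (fun i => f i + g i) = weightedMean μ f + weightedMean μ g := by
  simp only [weightedMean, mul_add, sum_add_distrib]

theorem weightedMean_sub (f g : ι → ℝ) :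
    weightedMean μ (fun i => f i - g i) = weightedMean μ f - weightedMean μ g := by
  simp only [weightedMean, mul_sub, sum_sub_distrib]

theorem weightedMean_const_mul (c : ℝ) (f : ι → ℝ) :
    weightedMean μ (fun i => c * f i) = c * weightedMean μ f := by
  simp only [weightedMean, mul_left_comm _ c, ← mul_sum]

theorem weightedMean_mul_const (c : ℝ) (f : ι → ℝ) :
    weightedMean μ (fun i => f i * c) = weightedMean μ f * c := by
  simp only [weightedMean, ← mul_assoc, ← sum_mul]

theorem weightedMean_const (hμ : ∑ i, μ i = 1) (c : ℝ) :
    weightedMean μ (fun _ => c) = c := by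
  simp only [weightedMean, ← sum_mul, hμ, one_mul]

theorem weightedMean_sq_eq (f : ι → ℝ) :
    weightedMean μ (fun i => f i ^ 2) = weightedVar μ f + weightedMean μ f ^ 2 := by
  rw [weightedVar]; ring

theorem weightedVar_const_add (hμ : ∑ i, μ i = 1) (c : ℝ) (f : ι → ℝ) :
    weightedVar μ (fun i => c + f i) = weightedVar μ f := by
  simp only [weightedVar, add_sq, weightedMean_add, weightedMean_const hμ, weightedMean_const_mul]
  ring

theorem weightedVar_sub_const (hμ : ∑ i, μ i = 1) (f : ι → ℝ) (c : ℝ) :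
    weightedVar μ (fun i => f i - c) = weightedVar μ f := by
  simpa only [neg_add_eq_sub] using weightedVar_const_add hμ (-c) f

theorem weightedVar_const_mul (c : ℝ) (f : ι → ℝ) :
    weightedVar μ (fun i => c * f i) = c ^ 2 * weightedVar μ f := by
  simp only [weightedVar, mul_pow, weightedMean_const_mul]
  ring

theorem weightedVar_eq_weightedMean_sq_sub (hμ : ∑ i, μ i = 1) (f : ι → ℝ) :
    weightedVar μ f = weightedMean μ (fun i => (f i - weightedMean μ f) ^ 2) := by
  simp only [sub_sq, weightedMean_add, weightedMean_sub, weightedMean_mul_const,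
    weightedMean_const_mul, weightedMean_const hμ, weightedVar]
  ring

theorem weightedMean_const_add_mul_sub (hμ : ∑ i, μ i = 1) (c d e : ℝ) (f : ι → ℝ) :
    weightedMean μ (fun i => c + d * (f i - e)) = c + d * (weightedMean μ f - e) := by
  rw [weightedMean_add, weightedMean_const_mul, weightedMean_sub, weightedMean_const hμ,
    weightedMean_const hμ]

theorem weightedMean_sq_const_add_mul_sub (hμ : ∑ i, μ i = 1) (c d e : ℝ) (f : ι → ℝ) :
    weightedMean μ (fun i => (c + d * (f i - e)) ^ 2)
      = d ^ 2 * weightedVar μ f + (c + d * (weightedMean μ f - e)) ^ 2 := by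
  rw [weightedMean_sq_eq, weightedMean_const_add_mul_sub hμ, weightedVar_const_add hμ,
    weightedVar_const_mul, weightedVar_sub_const hμ]

theorem weightedMean_weightedVar_add_weightedVar_weightedMean {κ : Type*} [Fintype κ]
    (ν : ι → κ → ℝ) (f : ι → κ → ℝ) :
    weightedMean μ (fun i => weightedVar (ν i) (f i))
        + weightedVar μ (fun i => weightedMean (ν i) (f i))
      = weightedMean μ (fun i => weightedMean (ν i) (fun j => f i j ^ 2))
        - weightedMean μ (fun i => weightedMean (ν i) (f i)) ^ 2 := by
  simp only [weightedVar, weightedMean_sub]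
  ring

theorem weightedMean_div_mul_of_support (ν : ι → ℝ) (hsupp : ∀ i, μ i = 0 → ν i = 0)
    (f : ι → ℝ) :
    weightedMean μ (fun i => ν i / μ i * f i) = weightedMean ν f := by
  simp only [weightedMean, ← mul_assoc, mul_div_cancel_of_imp' (hsupp _)]

end Weighted

theorem dr_variance_decomposition_general {X A R : Type*} [Fintype X] [Fintype A] [Fintype R]
    (p : X → ℝ) (πb πe : X → A → ℝ) (pr : X → A → R → ℝ) (rv : R → ℝ)
    (q qhat : X → A → ℝ) (σ2 : X → A → ℝ)
    (hπbsum : ∀ x, ∑ a, πb x a = 1)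
    (hπe : ∀ x a, 0 ≤ πe x a)
    (hprsum : ∀ x a, ∑ r, pr x a r = 1)
    (hq : ∀ x a, q x a = ∑ r, pr x a r * rv r)
    (hσ2 : ∀ x a, σ2 x a = ∑ r, pr x a r * (rv r - q x a) ^ 2)
    (hsupport : ∀ x a, 0 < πe x a → 0 < πb x a) :
    (∑ x, p x * ∑ a, πb x a * ∑ r, pr x a r *
        ((∑ a', πe x a' * qhat x a') + πe x a / πb x a * (rv r - qhat x a)) ^ 2)
      - (∑ x, p x * ∑ a, πb x a * ∑ r, pr x a r *
        ((∑ a', πe x a' * qhat x a') + πe x a / πb x a * (rv r - qhat x a))) ^ 2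
    = (∑ x, p x * ∑ a, πb x a * ((πe x a / πb x a) ^ 2 * σ2 x a))
      + ((∑ x, p x * (∑ a, πb x a * (πe x a / πb x a * q x a)) ^ 2)
          - (∑ x, p x * ∑ a, πb x a * (πe x a / πb x a * q x a)) ^ 2)
      + ∑ x, p x * ((∑ a, πb x a * (πe x a / πb x a * (q x a - qhat x a)) ^ 2)
          - (∑ a, πb x a * (πe x a / πb x a * (q x a - qhat x a))) ^ 2) := by
  have hsupp : ∀ x a, πb x a = 0 → πe x a = 0 := fun x a hb =>
    le_antisymm (not_lt.1 fun he => (hsupport x a he).ne' hb) (hπe x a)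
  simp only [sum_mul_eq_weightedMean, weightedMean_sq_sub_sq] at hq hσ2 ⊢
  have hσ2_var : ∀ x a, σ2 x a = weightedVar (pr x a) rv := fun x a => by
    rw [hσ2, hq, weightedVar_eq_weightedMean_sq_sub (hprsum x a)]
  have hbaseline : ∀ x, weightedMean (πb x)
      (fun a => weightedMean (πe x) (qhat x) + πe x a / πb x a * (q x a - qhat x a))
        = weightedMean (πb x) (fun a => πe x a / πb x a * q x a) := by
    intro x
    rw [weightedMean_add, weightedMean_const (hπbsum x),
      weightedMean_div_mul_of_support _ (hsupp x), weightedMean_div_mul_of_support _ (hsupp x),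
      weightedMean_sub]
    ring
  -- `weightedMean_add` alone would also split the mean inside the square
  have hsplit : ∀ x, weightedMean (πb x) (fun a => (πe x a / πb x a) ^ 2 * σ2 x a
      + (weightedMean (πe x) (qhat x) + πe x a / πb x a * (q x a - qhat x a)) ^ 2)
        = weightedMean (πb x) (fun a => (πe x a / πb x a) ^ 2 * σ2 x a)
          + weightedMean (πb x) (fun a =>
            (weightedMean (πe x) (qhat x) + πe x a / πb x a * (q x a - qhat x a)) ^ 2) :=
    fun x => weightedMean_add _ _
  simp only [weightedMean_sq_const_add_mul_sub (hprsum _ _),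
    weightedMean_const_add_mul_sub (hprsum _ _), ← hq, ← hσ2_var, hsplit]
  rw [weightedMean_add, add_sub_assoc, ← weightedMean_weightedVar_add_weightedVar_weightedMean]
  simp only [weightedVar_const_add (hπbsum _), hbaseline]
  ring

/-- Single-sample DR variance decomposition under common support: the variance of the
DR estimand decomposes as for IPS, except that the within-context term involves the
weighted estimation error `w(x,a)·Δ(x,a)` with `Δ(x,a) = q(x,a) − q̂(x,a)`. -/
theorem dr_variance_decomposition {X A R : Type*} [Fintype X] [Fintype A] [Fintype R]
    (p : X → ℝ) (πb πe : X → A → ℝ) (pr : X → A → R → ℝ) (rv : R → ℝ)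
    (q qhat : X → A → ℝ) (σ2 : X → A → ℝ)
    (hp : ∀ x, 0 ≤ p x) (hpsum : ∑ x, p x = 1)
    (hπb : ∀ x a, 0 ≤ πb x a) (hπbsum : ∀ x, ∑ a, πb x a = 1)
    (hπe : ∀ x a, 0 ≤ πe x a) (hπesum : ∀ x, ∑ a, πe x a = 1)
    (hpr : ∀ x a r, 0 ≤ pr x a r) (hprsum : ∀ x a, ∑ r, pr x a r = 1)
    (hq : ∀ x a, q x a = ∑ r, pr x a r * rv r)
    (hσ2 : ∀ x a, σ2 x a = ∑ r, pr x a r * (rv r - q x a) ^ 2)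
    (hsupport : ∀ x a, 0 < πe x a → 0 < πb x a) :
    (∑ x, p x * ∑ a, πb x a * ∑ r, pr x a r *
        ((∑ a', πe x a' * qhat x a') + πe x a / πb x a * (rv r - qhat x a)) ^ 2)
      - (∑ x, p x * ∑ a, πb x a * ∑ r, pr x a r *
        ((∑ a', πe x a' * qhat x a') + πe x a / πb x a * (rv r - qhat x a))) ^ 2
    = (∑ x, p x * ∑ a, πb x a * ((πe x a / πb x a) ^ 2 * σ2 x a))
      + ((∑ x, p x * (∑ a, πb x a * (πe x a / πb x a * q x a)) ^ 2)
          - (∑ x, p x * ∑ a, πb x a * (πe x a / πb x a * q x a)) ^ 2)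
      + ∑ x, p x * ((∑ a, πb x a * (πe x a / πb x a * (q x a - qhat x a)) ^ 2)
          - (∑ a, πb x a * (πe x a / πb x a * (q x a - qhat x a))) ^ 2) :=
  dr_variance_decomposition_general p πb πe pr rv q qhat σ2 hπbsum hπe hprsum hq hσ2 hsupport
end
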